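/- Let Λ be a left cancellative small category, let M be a conical atomic monoid, let d : Λ → M be a length function satisfying (LF1) and (LF2), and let B be a transversal of generators of the maximal proper principal right ideals of Λ (a subset of the atoms of Λ containing exactly one generator of each maximal proper principal right ideal). Then Λ = B*Λ⁻¹, where B* is the subcategory of Λ generated by B (together with the identities): every morphism of Λ can be written as βg with β ∈ B* and g ∈ Λ⁻¹. -/

import Mathlib

/-- A left cancellative small category (LCSC), presented as a set of morphisms
with source and range maps and a (total, but only meaningful on composable
pairs) composition. Identities are the morphisms of the form `src a` / `ran a`. -/
structure LCSC where
  Mor : Type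
  src : Mor → Mor
  ran : Mor → Mor
  comp : Mor → Mor → Mor
  src_src : ∀ a, src (src a) = src a
  ran_src : ∀ a, ran (src a) = src a
  src_ran : ∀ a, src (ran a) = ran a
  ran_ran : ∀ a, ran (ran a) = ran a
  comp_src : ∀ a, comp a (src a) = a
  id_comp : ∀ a, comp (ran a) a = a
  src_comp : ∀ a b, src a = ran b → src (comp a b) = src b
  ran_comp : ∀ a b, src a = ran b → ran (comp a b) = ran a
  assoc : ∀ a b c, src a = ran b → src b = ran c →
      comp (comp a b) c = comp a (comp b c)
  leftCancel : ∀ a b c, src a = ran b → src a = ran c →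
      comp a b = comp a c → b = c

namespace LCSC

variable (C : LCSC)

/-- `v` is an identity morphism (an object of `Λ⁰`). -/
def IsId (v : C.Mor) : Prop := C.src v = v ∧ C.ran v = v

/-- `a ∈ Λ⁻¹`, i.e. `a` is invertible. -/
def IsInvertible (a : C.Mor) : Prop :=
  ∃ b, C.src a = C.ran b ∧ C.src b = C.ran a ∧
    C.comp a b = C.ran a ∧ C.comp b a = C.src a

/-- The principal right ideal `aΛ`. -/
def Ideal (a : C.Mor) : Set C.Mor :=
  {x | ∃ c, C.src a = C.ran c ∧ x = C.comp a c}

/-- `a ≤ b` iff `b ∈ aΛ`, i.e. `a` is an initial segment of `b`. -/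
def le (a b : C.Mor) : Prop := b ∈ C.Ideal a

end LCSC
/-- `d : Λ → M` is a length function into the monoid `M`. -/
def LCSC.MLenFn (C : LCSC) {M : Type} [Monoid M] (d : C.Mor → M) : Prop :=
  ∀ a b, C.src a = C.ran b → d (C.comp a b) = d a * d b

/-- (LF1): `d⁻¹(1) = Λ⁻¹`. -/
def LCSC.LF1 (C : LCSC) {M : Type} [Monoid M] (d : C.Mor → M) : Prop :=
  ∀ a, d a = 1 ↔ C.IsInvertible a

/-- (LF2): every factorization of `d(α)` in `M` lifts to a factorization of `α`. -/
def LCSC.LF2 (C : LCSC) {M : Type} [Monoid M] (d : C.Mor → M) : Prop :=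
  ∀ a m₁ m₂, d a = m₁ * m₂ →
    ∃ a₁ a₂, C.src a₁ = C.ran a₂ ∧ a = C.comp a₁ a₂ ∧ d a₁ = m₁ ∧ d a₂ = m₂

/-- The monoid `M` is conical: `m₁m₂ = 1` implies `m₁ = m₂ = 1`. -/
def Conical (M : Type) [Monoid M] : Prop :=
  ∀ m₁ m₂ : M, m₁ * m₂ = 1 → m₁ = 1 ∧ m₂ = 1

/-- `e ∈ M` is an atom: `e = m₁m₂` implies `m₁ = 1` or `m₂ = 1`. -/
def MAtom {M : Type} [Monoid M] (e : M) : Prop :=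
  ∀ m₁ m₂ : M, e = m₁ * m₂ → m₁ = 1 ∨ m₂ = 1

/-- `M` is atomic: it is generated by its atoms. -/
def AtomicMonoid (M : Type) [Monoid M] : Prop :=
  ∀ m : M, m ∈ Submonoid.closure {e : M | MAtom e}

/-- `α ∈ Λ` is an atom: whenever `α = βγ`, then `β ∈ Λ⁻¹` or `γ ∈ Λ⁻¹`. -/
def LCSC.CAtom (C : LCSC) (a : C.Mor) : Prop :=
  ∀ b c, C.src b = C.ran c → a = C.comp b c →
    C.IsInvertible b ∨ C.IsInvertible c

/-- `αΛ` is a maximal proper principal right ideal: it is properly contained in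
`r(α)Λ` and maximal among principal right ideals properly contained in `r(α)Λ`. -/
def LCSC.MaxIdeal (C : LCSC) (a : C.Mor) : Prop :=
  C.Ideal a ⊂ C.Ideal (C.ran a) ∧
  ∀ b : C.Mor, C.Ideal a ⊆ C.Ideal b → C.Ideal b ⊂ C.Ideal (C.ran a) →
    C.Ideal b = C.Ideal a

/-- The subcategory `B*` of `Λ` generated by a set `B` of morphisms, together
with the identities. -/
inductive GenSubcat (C : LCSC) (B : Set C.Mor) : C.Mor → Prop
  | id (v : C.Mor) : C.IsId v → GenSubcat C B v
  | of (b : C.Mor) : b ∈ B → GenSubcat C B b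
  | comp (a b : C.Mor) : GenSubcat C B a → GenSubcat C B b →
      C.src a = C.ran b → GenSubcat C B (C.comp a b)

/-- `B` is a transversal of generators of the maximal proper principal right
ideals of `Λ`: a set of atoms containing exactly one generator of each maximal
proper principal right ideal. -/
def LCSC.IsTransversal (C : LCSC) (B : Set C.Mor) : Prop :=
  (∀ b ∈ B, C.CAtom b) ∧
  ∀ a : C.Mor, C.MaxIdeal a → ∃! b, b ∈ B ∧ C.Ideal b = C.Ideal a

/-!
A morphism whose length is an atom of `M` other than `1` generates a maximal proper principal
right ideal, hence equals `b g` with `b ∈ B` and `g` invertible. Writing `d α` as a product of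
atoms, (LF2) peels off such a morphism `b₁ g₁`; the invertible `g₁` is absorbed into the rest,
whose length is the remaining product, so induction on the atomic factorization gives
`α = b₁ ⋯ bₙ g`.
-/

namespace LCSC

variable {C : LCSC}

lemma isId_ran (a : C.Mor) : C.IsId (C.ran a) := ⟨C.src_ran a, C.ran_ran a⟩

lemma IsId.isInvertible {v : C.Mor} (h : C.IsId v) : C.IsInvertible v := by
  have hv : C.comp v v = v := by simpa only [h.1] using C.comp_src v
  exact ⟨v, by rw [h.1, h.2], by rw [h.1, h.2], by rw [hv, h.2], by rw [hv, h.1]⟩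

lemma mem_ideal_self (a : C.Mor) : a ∈ C.Ideal a :=
  ⟨C.src a, (C.ran_src a).symm, (C.comp_src a).symm⟩

lemma ideal_subset_of_eq_comp {a b c : C.Mor} (hbc : C.src b = C.ran c) (h : a = C.comp b c) :
    C.Ideal a ⊆ C.Ideal b := by
  subst h
  rintro _ ⟨c', hc', rfl⟩
  have hcc' : C.src c = C.ran c' := by rwa [C.src_comp b c hbc] at hc'
  exact ⟨C.comp c c', by rw [C.ran_comp c c' hcc', hbc], C.assoc b c c' hbc hcc'⟩

lemma ideal_subset_ideal_ran (a : C.Mor) : C.Ideal a ⊆ C.Ideal (C.ran a) :=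
  ideal_subset_of_eq_comp (C.src_ran a) (C.id_comp a).symm

lemma ideal_eq_ideal_ran_of_isInvertible {a : C.Mor} (h : C.IsInvertible a) :
    C.Ideal a = C.Ideal (C.ran a) := by
  obtain ⟨a', haa', -, hcomp, -⟩ := h
  exact (ideal_subset_ideal_ran a).antisymm (ideal_subset_of_eq_comp haa' hcomp.symm)

lemma comp_eq_src_of_comp_comp_eq {b g k : C.Mor} (hbg : C.src b = C.ran g)
    (hgk : C.src g = C.ran k) (h : C.comp (C.comp b g) k = b) : C.comp g k = C.src b := by
  refine C.leftCancel b _ _ (by rw [C.ran_comp g k hgk, hbg]) (C.ran_src b).symm ?_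
  rw [← C.assoc b g k hbg hgk, h, C.comp_src]

lemma exists_isInvertible_of_ideal_eq {a b : C.Mor} (h : C.Ideal b = C.Ideal a) :
    ∃ g, C.IsInvertible g ∧ C.src b = C.ran g ∧ a = C.comp b g := by
  obtain ⟨g, hbg, rfl⟩ : a ∈ C.Ideal b := h ▸ mem_ideal_self a
  obtain ⟨k, hk, hb⟩ : b ∈ C.Ideal (C.comp b g) := h ▸ mem_ideal_self b
  have hsrc : C.src (C.comp b g) = C.src g := C.src_comp b g hbg
  have hgk : C.src g = C.ran k := hsrc.symm.trans hk
  have hkg : C.src k = C.ran g := by rw [← hbg, hb, C.src_comp _ k hk]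
  have hgk_id : C.comp g k = C.src b := comp_eq_src_of_comp_comp_eq hbg hgk hb.symm
  have hkg_id : C.comp k g = C.src g :=
    hsrc ▸ comp_eq_src_of_comp_comp_eq hk hkg (by rw [← hb])
  exact ⟨g, ⟨k, hgk, hkg, hgk_id.trans hbg, hkg_id⟩, hbg, rfl⟩

section LengthFunction

variable {M : Type} [Monoid M] {d : C.Mor → M}

lemma LF1.length_ran (h1 : C.LF1 d) (a : C.Mor) : d (C.ran a) = 1 :=
  (h1 _).mpr (isId_ran a).isInvertible

lemma ideal_ssubset_ideal_ran_of_length_ne_one (hM : Conical M) (hd : C.MLenFn d)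
    (h1 : C.LF1 d) {a : C.Mor} (ha : d a ≠ 1) : C.Ideal a ⊂ C.Ideal (C.ran a) := by
  refine (ideal_subset_ideal_ran a).ssubset_of_ne fun h => ha ?_
  obtain ⟨c, hc, hran⟩ : C.ran a ∈ C.Ideal a := h ▸ mem_ideal_self _
  exact (hM _ _ (by rw [← hd a c hc, ← hran, h1.length_ran])).1

lemma maxIdeal_of_length_atom (hM : Conical M) (hd : C.MLenFn d) (h1 : C.LF1 d) {a : C.Mor}
    (hatom : MAtom (d a)) (hne : d a ≠ 1) : C.MaxIdeal a := by
  refine ⟨ideal_ssubset_ideal_ran_of_length_ne_one hM hd h1 hne, fun b hab hb => ?_⟩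
  obtain ⟨c, hbc, hacomp⟩ : a ∈ C.Ideal b := hab (mem_ideal_self a)
  have hran : C.ran a = C.ran b := by rw [hacomp, C.ran_comp b c hbc]
  rcases hatom _ _ (by rw [hacomp]; exact hd b c hbc) with hb1 | hc1
  · rw [hran, ← ideal_eq_ideal_ran_of_isInvertible ((h1 b).mp hb1)] at hb
    exact absurd hb (ssubset_irrefl _)
  · obtain ⟨c', hcc', -, hcc'_id, -⟩ := (h1 c).mp hc1
    have hac' : C.src a = C.ran c' := by rw [hacomp, C.src_comp b c hbc, hcc']
    have hb_eq : b = C.comp a c' := by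
      rw [hacomp, C.assoc b c c' hbc hcc', hcc'_id, ← hbc, C.comp_src]
    exact (ideal_subset_of_eq_comp hac' hb_eq).antisymm hab

end LengthFunction

/-- The set `B*Λ⁻¹`. -/
def genSubcatMulInvertibles (C : LCSC) (B : Set C.Mor) : Set C.Mor :=
  {a | ∃ β g, GenSubcat C B β ∧ C.IsInvertible g ∧ C.src β = C.ran g ∧ a = C.comp β g}

lemma IsInvertible.mem_genSubcatMulInvertibles {B : Set C.Mor} {g : C.Mor}
    (hg : C.IsInvertible g) : g ∈ C.genSubcatMulInvertibles B :=
  ⟨C.ran g, g, .id _ (isId_ran g), hg, C.src_ran g, (C.id_comp g).symm⟩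

lemma comp_mem_genSubcatMulInvertibles {B : Set C.Mor} {b a : C.Mor} (hb : GenSubcat C B b)
    (hba : C.src b = C.ran a) (ha : a ∈ C.genSubcatMulInvertibles B) :
    C.comp b a ∈ C.genSubcatMulInvertibles B := by
  obtain ⟨β, g, hβ, hg, hβg, rfl⟩ := ha
  have hbβ : C.src b = C.ran β := by rwa [C.ran_comp β g hβg] at hba
  exact ⟨C.comp b β, g, .comp b β hb hβ hbβ, hg, by rw [C.src_comp b β hbβ, hβg],
    (C.assoc b β g hbβ hβg).symm⟩

lemma mem_genSubcatMulInvertibles_of_length_mem_closure {M : Type} [Monoid M] {d : C.Mor → M}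
    (hM : Conical M) (hd : C.MLenFn d) (h1 : C.LF1 d) (h2 : C.LF2 d) {B : Set C.Mor}
    (hB : ∀ a, C.MaxIdeal a → ∃ b ∈ B, C.Ideal b = C.Ideal a) {a : C.Mor}
    (ha : d a ∈ Submonoid.closure {e : M | MAtom e}) : a ∈ C.genSubcatMulInvertibles B := by
  suffices ∀ m ∈ Submonoid.closure {e : M | MAtom e}, ∀ a, d a = m →
      a ∈ C.genSubcatMulInvertibles B from this _ ha a rfl
  intro m hm
  induction hm using Submonoid.closure_induction_left with
  | one => exact fun a ha => ((h1 a).mp ha).mem_genSubcatMulInvertibles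
  | mul_left e he m _ ih =>
    intro a ha
    by_cases he1 : e = 1
    · exact ih a (by rw [ha, he1, one_mul])
    obtain ⟨a₁, a₂, h12, rfl, hd1, hd2⟩ := h2 a e m ha
    obtain ⟨b, hbB, hba₁⟩ :=
      hB a₁ (maxIdeal_of_length_atom hM hd h1 (hd1 ▸ he) (hd1 ▸ he1))
    obtain ⟨g, hg, hbg, rfl⟩ := exists_isInvertible_of_ideal_eq hba₁
    have hga₂ : C.src g = C.ran a₂ := by rwa [C.src_comp b g hbg] at h12
    have hlen : d (C.comp g a₂) = m := by rw [hd g a₂ hga₂, (h1 g).mpr hg, one_mul, hd2]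
    rw [C.assoc b g a₂ hbg hga₂]
    exact comp_mem_genSubcatMulInvertibles (.of b hbB) (by rw [C.ran_comp g a₂ hga₂, hbg])
      (ih _ hlen)

end LCSC

/-- For a length function `d : Λ → M` into a conical atomic
monoid satisfying (LF1) and (LF2), and a transversal `B` of generators of the
maximal proper principal right ideals, `Λ = B*Λ⁻¹`: every morphism of `Λ` can
be written as `βg` with `β ∈ B*` and `g ∈ Λ⁻¹`. -/
theorem lcsc_eq_genSubcat_mul_invertibles (C : LCSC) {M : Type} [Monoid M]
    (hM : Conical M) (hMa : AtomicMonoid M) (d : C.Mor → M)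
    (hd : C.MLenFn d) (h1 : C.LF1 d) (h2 : C.LF2 d)
    (B : Set C.Mor) (hB : C.IsTransversal B) :
    ∀ a : C.Mor, ∃ β g, GenSubcat C B β ∧ C.IsInvertible g ∧
      C.src β = C.ran g ∧ a = C.comp β g := fun a =>
  LCSC.mem_genSubcatMulInvertibles_of_length_mem_closure hM hd h1 h2
    (fun a' ha' => (hB.2 a' ha').exists) (hMa (d a))
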